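/- Let B be the adjacency matrix of a connected undirected graph on N vertices, and let x, y : ℝ → ℝ^N be differentiable at a point τ₂ > 0, with 0 < x_i(τ), 0 < y_i(τ) and x_i(τ) + y_i(τ) < 1 for all i, for τ in a neighborhood of τ₂, and suppose that for every such τ the coexistence fixed point equation Σ_j B_{ij} y_j(τ) = y_i(τ)/(τ(1 − x_i(τ) − y_i(τ))) holds for all i. If y_j'(τ₂) > 0 for all j, then differentiating the logarithm of the fixed point equation yields, for every i, the strict inequality y_i'(τ₂)/y_i(τ₂) + (x_i'(τ₂) + y_i'(τ₂))/(1 − x_i(τ₂) − y_i(τ₂)) − 1/τ₂ > 0. -/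

import Mathlib

open Matrix Finset

/-- Spectral radius of a real matrix: supremum of absolute values of its complex eigenvalues. -/
noncomputable def specRad {N : ℕ} (M : Matrix (Fin N) (Fin N) ℝ) : ℝ :=
  sSup ((fun z => ‖z‖) '' spectrum ℂ (M.map Complex.ofReal))

/-- `A` is the adjacency matrix of a connected undirected graph:
symmetric, 0/1 entries, zero diagonal, and irreducible (connectivity). -/
def IsConnectedAdjMatrix {N : ℕ} (A : Matrix (Fin N) (Fin N) ℝ) : Prop :=
  A.IsSymm ∧ (∀ i j, A i j = 0 ∨ A i j = 1) ∧ (∀ i, A i i = 0) ∧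
    (∀ i j, i ≠ j → ∃ k : ℕ, 0 < (A ^ k) i j)

/-- `x` satisfies the single-virus SIS fixed point equations for `(A, τ)`. -/
def IsSISFixedPoint {N : ℕ} (A : Matrix (Fin N) (Fin N) ℝ) (τ : ℝ)
    (x : Fin N → ℝ) : Prop :=
  (∀ i, 0 < x i ∧ x i < 1) ∧ (∀ i, ∑ j, A i j * x j = x i / (τ * (1 - x i)))

/-!
Take logarithmic derivatives of both sides of the `i`-th fixed point equation at `τ₂`. The
right-hand side `y_i / (τ (1 - x_i - y_i))` gives exactly the expression of the claim, and the
left-hand side gives `(∑_j B_ij y_j') / (∑_j B_ij y_j)`. The denominator is positive because it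
equals the positive right-hand side, so the nonnegative row `B_i` has a nonzero entry; as all
`y_j' > 0`, the numerator is positive as well.
-/

lemma IsConnectedAdjMatrix.nonneg {N : ℕ} {A : Matrix (Fin N) (Fin N) ℝ}
    (hA : IsConnectedAdjMatrix A) (i j : Fin N) : 0 ≤ A i j := by
  rcases hA.2.1 i j with h | h <;> simp [h]

lemma sum_mul_pos_of_sum_mul_pos {ι R : Type*} [Fintype ι] [Semiring R] [PartialOrder R]
    [IsStrictOrderedRing R] {a u v : ι → R}
    (ha : ∀ j, 0 ≤ a j) (hv : ∀ j, 0 < v j) (hu : 0 < ∑ j, a j * u j) :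
    0 < ∑ j, a j * v j := by
  obtain ⟨k, -, hk⟩ := Finset.exists_ne_zero_of_sum_ne_zero hu.ne'
  have hak : 0 < a k := (ha k).lt_of_ne' (left_ne_zero_of_mul hk)
  exact Finset.sum_pos' (fun j _ => mul_nonneg (ha j) (hv j).le)
    ⟨k, Finset.mem_univ k, mul_pos hak (hv k)⟩

lemma logDeriv_div_id_mul {𝕜 : Type*} [NontriviallyNormedField 𝕜] {f g : 𝕜 → 𝕜} {t : 𝕜}
    (hf : DifferentiableAt 𝕜 f t) (hg : DifferentiableAt 𝕜 g t)
    (hft : f t ≠ 0) (ht : t ≠ 0) (hgt : g t ≠ 0) :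
    logDeriv (fun s => f s / (s * g s)) t = logDeriv f t - 1 / t - logDeriv g t := by
  rw [logDeriv_div (g := fun s => s * g s) t hft (mul_ne_zero ht hgt) hf
      (differentiableAt_fun_id.mul hg),
    logDeriv_mul (f := fun s => s) t ht hgt differentiableAt_fun_id hg, logDeriv_id']
  ring

/-- Let `B` be the adjacency matrix of a connected undirected graph on `N`
vertices, and let `x, y : ℝ → ℝ^N` be differentiable at a point `τ₂ > 0`, with `0 < x_i(τ)`,
`0 < y_i(τ)` and `x_i(τ) + y_i(τ) < 1` for all `i`, for `τ` in a neighborhood of `τ₂`, and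
suppose that for every such `τ` the coexistence fixed point equation
`Σ_j B_{ij} y_j(τ) = y_i(τ)/(τ(1 − x_i(τ) − y_i(τ)))` holds for all `i`. If `y_j'(τ₂) > 0`
for all `j`, then differentiating the logarithm of the fixed point equation yields, for every
`i`, the strict inequality
`y_i'(τ₂)/y_i(τ₂) + (x_i'(τ₂) + y_i'(τ₂))/(1 − x_i(τ₂) − y_i(τ₂)) − 1/τ₂ > 0`. -/
theorem log_derivative_inequality {N : ℕ}
    (B : Matrix (Fin N) (Fin N) ℝ) (hB : IsConnectedAdjMatrix B)
    (τ₂ : ℝ) (hτ₂ : 0 < τ₂)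
    (x y : ℝ → Fin N → ℝ)
    (hdx : ∀ i, DifferentiableAt ℝ (fun τ => x τ i) τ₂)
    (hdy : ∀ i, DifferentiableAt ℝ (fun τ => y τ i) τ₂)
    (hnbhd : ∀ᶠ τ in nhds τ₂,
      (∀ i, 0 < x τ i ∧ 0 < y τ i ∧ x τ i + y τ i < 1) ∧
      (∀ i, ∑ j, B i j * y τ j = y τ i / (τ * (1 - x τ i - y τ i))))
    (hy' : ∀ j, 0 < deriv (fun τ => y τ j) τ₂) :
    ∀ i, 0 < deriv (fun τ => y τ i) τ₂ / y τ₂ i +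
        (deriv (fun τ => x τ i) τ₂ + deriv (fun τ => y τ i) τ₂) /
          (1 - x τ₂ i - y τ₂ i) - 1 / τ₂ := by
  intro i
  obtain ⟨hbounds, hfix⟩ := hnbhd.self_of_nhds
  obtain ⟨-, hyi, hxyi⟩ := hbounds i
  have hslack : 0 < 1 - x τ₂ i - y τ₂ i := by linarith
  have hsum : 0 < ∑ j, B i j * y τ₂ j := hfix i ▸ by positivity
  have hsum' : 0 < ∑ j, B i j * deriv (fun τ => y τ j) τ₂ :=
    sum_mul_pos_of_sum_mul_pos (hB.nonneg i) hy' hsum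
  have hderiv : HasDerivAt (fun τ => ∑ j, B i j * y τ j)
      (∑ j, B i j * deriv (fun τ => y τ j) τ₂) τ₂ :=
    HasDerivAt.fun_sum fun j _ => (hdy j).hasDerivAt.const_mul (B i j)
  have hslackDeriv : HasDerivAt (fun τ => 1 - x τ i - y τ i)
      (0 - deriv (fun τ => x τ i) τ₂ - deriv (fun τ => y τ i) τ₂) τ₂ :=
    ((hasDerivAt_const τ₂ 1).sub (hdx i).hasDerivAt).sub (hdy i).hasDerivAt
  have hlog : logDeriv (fun τ => ∑ j, B i j * y τ j) τ₂ =
      logDeriv (fun τ => y τ i / (τ * (1 - x τ i - y τ i))) τ₂ :=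
    (logDeriv_congr_nhds (hnbhd.mono fun τ h => h.2 i)).self_of_nhds
  rw [logDeriv_div_id_mul (hdy i) hslackDeriv.differentiableAt hyi.ne' hτ₂.ne' hslack.ne',
    logDeriv_apply, logDeriv_apply, logDeriv_apply, hderiv.deriv, hslackDeriv.deriv] at hlog
  calc 0 < (∑ j, B i j * deriv (fun τ => y τ j) τ₂) / ∑ j, B i j * y τ₂ j := by positivity
    _ = _ := by rw [hlog]; ring
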